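/- For nonnegative integers i ≥ j ≥ 1, the Alladi–Gordon key identity for (i, j) follows from the identity for (i−1, j−1) together with the recurrence of Gaussian coefficients; concretely, ∑_{k=0}^{j} (q^{i-k+1};q)_k [j choose k]_q q^{(i-k)(j-k)} = ∑_{k=0}^{j-1} (q^{i-k};q)_k [j-1 choose k]_q q^{(i-1-k)(j-1-k)}, both sums being equal to 1. -/
import Mathlib


open Finset

/-- The variable `q`, as a rational function over `ℚ`. -/
noncomputable def q : RatFunc ℚ := RatFunc.X

/-- The q-shifted factorial `(a; q)_k = (1-a)(1-aq)⋯(1-aq^{k-1})`. -/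
noncomputable def qPoch (a : RatFunc ℚ) (k : ℕ) : RatFunc ℚ :=
  ∏ s ∈ Finset.range k, (1 - a * q ^ s)

/-- The Gaussian (q-binomial) coefficient `[j choose k]_q = (q;q)_j / ((q;q)_k (q;q)_{j-k})`. -/
noncomputable def qbinom (j k : ℕ) : RatFunc ℚ :=
  qPoch q j / (qPoch q k * qPoch q (j - k))

lemma q_pow_ne_one {n : ℕ} (hn : 0 < n) : (q : RatFunc ℚ) ^ n ≠ 1 := by
  intro h
  have hX : (Polynomial.X : Polynomial ℚ) ^ n = 1 := by
    apply RatFunc.algebraMap_injective ℚ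
    simpa [q, map_pow, RatFunc.algebraMap_X] using h
  have := congrArg Polynomial.natDegree hX
  simp [Polynomial.natDegree_X_pow] at this
  omega

lemma one_sub_q_pow_ne_zero {n : ℕ} (hn : 0 < n) : (1 : RatFunc ℚ) - q ^ n ≠ 0 := by
  intro h
  exact q_pow_ne_one hn (by linear_combination -h)

lemma qPoch_zero (a : RatFunc ℚ) : qPoch a 0 = 1 := Finset.prod_range_zero _

lemma qPoch_succ (a : RatFunc ℚ) (n : ℕ) : qPoch a (n+1) = qPoch a n * (1 - a * q^n) :=
  Finset.prod_range_succ _ _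

lemma qPoch_q_ne_zero (n : ℕ) : qPoch q n ≠ 0 := by
  unfold qPoch
  rw [Finset.prod_ne_zero_iff]
  intro s _
  have : (1 : RatFunc ℚ) - q * q ^ s = 1 - q ^ (s+1) := by ring
  rw [this]
  exact one_sub_q_pow_ne_zero (by omega)

lemma qPoch_pow_succ_left (m n : ℕ) :
    qPoch (q^m) (n+1) = (1 - q^m) * qPoch (q^(m+1)) n := by
  unfold qPoch
  rw [Finset.prod_range_succ', mul_comm]
  congr 1
  · simp
  · exact Finset.prod_congr rfl fun s _ => by ring

lemma qbinom_zero (n : ℕ) : qbinom n 0 = 1 := by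
  unfold qbinom
  rw [Nat.sub_zero, qPoch_zero, one_mul, div_self (qPoch_q_ne_zero n)]

lemma qbinom_self (n : ℕ) : qbinom n n = 1 := by
  unfold qbinom
  rw [Nat.sub_self, qPoch_zero, mul_one, div_self (qPoch_q_ne_zero n)]

lemma pascal (w u : ℕ) :
    qbinom (w+u+2) (w+1) = qbinom (w+u+1) w + q^(w+1) * qbinom (w+u+1) (w+1) := by
  unfold qbinom
  rw [show w+u+2-(w+1) = u+1 by omega, show w+u+1-w = u+1 by omega,
      show w+u+1-(w+1) = u by omega]
  have h1 : qPoch q (w+u+2) = qPoch q (w+u+1) * (1 - q * q^(w+u+1)) := qPoch_succ q (w+u+1)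
  have h2 : qPoch q (w+1) = qPoch q w * (1 - q * q^w) := qPoch_succ q w
  have h3 : qPoch q (u+1) = qPoch q u * (1 - q * q^u) := qPoch_succ q u
  have n1 := qPoch_q_ne_zero w
  have n2 := qPoch_q_ne_zero u
  have n3 : (1 : RatFunc ℚ) - q * q^w ≠ 0 := by
    have : (1 : RatFunc ℚ) - q * q^w = 1 - q^(w+1) := by ring
    rw [this]; exact one_sub_q_pow_ne_zero (by omega)
  have n4 : (1 : RatFunc ℚ) - q * q^u ≠ 0 := by
    have : (1 : RatFunc ℚ) - q * q^u = 1 - q^(u+1) := by ring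
    rw [this]; exact one_sub_q_pow_ne_zero (by omega)
  rw [h1, h2, h3]
  field_simp
  ring

lemma L1 (w u : ℕ) :
    qbinom (w+u) w * (1 - q^(w+u+1)) = qbinom (w+u+1) (w+1) * (1 - q^(w+1)) := by
  unfold qbinom
  rw [show w+u-w = u by omega, show w+u+1-(w+1) = u by omega]
  have h1 : qPoch q (w+u+1) = qPoch q (w+u) * (1 - q * q^(w+u)) := qPoch_succ q (w+u)
  have h2 : qPoch q (w+1) = qPoch q w * (1 - q * q^w) := qPoch_succ q w
  have n1 := qPoch_q_ne_zero w
  have n2 := qPoch_q_ne_zero u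
  have n3 : (1 : RatFunc ℚ) - q * q^w ≠ 0 := by
    have : (1 : RatFunc ℚ) - q * q^w = 1 - q^(w+1) := by ring
    rw [this]; exact one_sub_q_pow_ne_zero (by omega)
  rw [h1, h2]
  field_simp
  ring

lemma L2 (k u : ℕ) :
    qbinom (k+u) k * (1 - q^(k+u+1)) = qbinom (k+u+1) k * (1 - q^(u+1)) := by
  unfold qbinom
  rw [show k+u-k = u by omega, show k+u+1-k = u+1 by omega]
  have h1 : qPoch q (k+u+1) = qPoch q (k+u) * (1 - q * q^(k+u)) := qPoch_succ q (k+u)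
  have h2 : qPoch q (u+1) = qPoch q u * (1 - q * q^u) := qPoch_succ q u
  have n1 := qPoch_q_ne_zero k
  have n2 := qPoch_q_ne_zero u
  have n4 : (1 : RatFunc ℚ) - q * q^u ≠ 0 := by
    have : (1 : RatFunc ℚ) - q * q^u = 1 - q^(u+1) := by ring
    rw [this]; exact one_sub_q_pow_ne_zero (by omega)
  rw [h1, h2]
  field_simp
  ring

lemma core (u v w : ℕ) :
    qPoch (q^(u+v+1)) (w+2) * q^((u+v)*u)
      + qPoch (q^(u+v+2)) (w+1) * q^(w+1+(u+v+1)*(u+1))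
      - qPoch (q^(u+v+1)) (w+1) * q^((u+v)*u)
    = q^((w+2+u+v)+(u+v+1)*(u+1)) * (1-q^(w+1)) * qPoch (q^(u+v+2)) w
      - q^((w+2+u+v)+(u+v)*u) * (1-q^u) * qPoch (q^(u+v+1)) (w+1) := by
  have h1 : qPoch (q^(u+v+1)) (w+2) = (1 - q^(u+v+1)) * qPoch (q^(u+v+2)) (w+1) :=
    qPoch_pow_succ_left (u+v+1) (w+1)
  have h2 : qPoch (q^(u+v+2)) (w+1) = qPoch (q^(u+v+2)) w * (1 - q^(u+v+2) * q^w) :=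
    qPoch_succ _ w
  have h3 : qPoch (q^(u+v+1)) (w+1) = (1 - q^(u+v+1)) * qPoch (q^(u+v+2)) w :=
    qPoch_pow_succ_left (u+v+1) w
  rw [h1, h2, h3]
  ring

noncomputable def Ef (i j m : ℕ) : RatFunc ℚ :=
  if m = 0 ∨ j ≤ m then 0
  else q^(i+(i-m)*(j-m)) * (1-q^(j-1)) * qbinom (j-2) (m-1) * qPoch (q^(i-m+1)) (m-1)

lemma step (i j : ℕ) (hj : 1 ≤ j) (hji : j ≤ i) :
    ∑ k ∈ Finset.range (j + 1),
        qPoch (q ^ (i - k + 1)) k * qbinom j k * q ^ ((i - k) * (j - k)) =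
      ∑ k ∈ Finset.range j,
        qPoch (q ^ (i - k)) k * qbinom (j - 1) k * q ^ ((i - 1 - k) * (j - 1 - k)) := by
  have ha : ∀ k ∈ Finset.range (j+1),
      qPoch (q ^ (i - k + 1)) k * qbinom j k * q ^ ((i - k) * (j - k))
      = (if k = 0 then 0 else
          qPoch (q^(i-(k-1))) ((k-1)+1) * qbinom (j-1) (k-1) * q^((i-1-(k-1))*(j-1-(k-1))))
        + (if j ≤ k then 0 else
          qPoch (q^(i-k+1)) k * q^k * qbinom (j-1) k * q^((i-k)*(j-k))) := by
    intro k hk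
    have hk' : k < j + 1 := mem_range.mp hk
    by_cases h0 : k = 0
    · subst h0
      rw [if_pos rfl, if_neg (by omega), zero_add, qbinom_zero, qbinom_zero, qPoch_zero]
      ring
    · by_cases hkj : k = j
      · subst hkj
        rw [if_neg h0, if_pos le_rfl, add_zero, qbinom_self, qbinom_self (k-1),
            show k-k = 0 by omega, show k-1-(k-1) = 0 by omega,
            show i-(k-1) = i-k+1 by omega, show k-1+1 = k by omega]
        simp
      · rw [if_neg h0, if_neg (by omega)]
        obtain ⟨w, rfl⟩ : ∃ w, k = w + 1 := ⟨k-1, by omega⟩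
        obtain ⟨u, rfl⟩ : ∃ u, j = w+u+2 := ⟨j-w-2, by omega⟩
        obtain ⟨v, rfl⟩ : ∃ v, i = w+u+v+2 := ⟨i-(w+u+2), by omega⟩
        rw [show w+1-1 = w by omega,
            show w+u+v+2-(w+1)+1 = u+v+2 by omega, show w+u+v+2-(w+1) = u+v+1 by omega,
            show w+u+2-(w+1) = u+1 by omega, show w+u+v+2-w = u+v+2 by omega,
            show w+u+v+2-1-w = u+v+1 by omega, show w+u+2-1-w = u+1 by omega,
            show w+u+2-1 = w+u+1 by omega]
        linear_combination (pascal w u) * (qPoch (q^(u+v+2)) (w+1) * q^((u+v+1)*(u+1)))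
  have hb : ∀ k ∈ Finset.range j,
      qPoch (q^(i-k)) (k+1) * qbinom (j-1) k * q^((i-1-k)*(j-1-k))
        + qPoch (q^(i-k+1)) k * q^k * qbinom (j-1) k * q^((i-k)*(j-k))
      = qPoch (q^(i-k)) k * qbinom (j-1) k * q^((i-1-k)*(j-1-k))
          + (Ef i j k - Ef i j (k+1)) := by
    intro k hk
    have hkj : k < j := mem_range.mp hk
    have hEk : Ef i j k
        = q^(i+(i-k)*(j-k)) * (1-q^k) * qbinom (j-1) k * qPoch (q^(i-k+1)) (k-1) := by
      by_cases h0 : k = 0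
      · subst h0; simp [Ef]
      · unfold Ef
        rw [if_neg (by omega)]
        obtain ⟨w, rfl⟩ : ∃ w, k = w+1 := ⟨k-1, by omega⟩
        obtain ⟨u, rfl⟩ : ∃ u, j = w+u+2 := ⟨j-w-2, by omega⟩
        rw [show w+u+2-2 = w+u by omega, show w+1-1 = w by omega,
            show w+u+2-1 = w+u+1 by omega]
        linear_combination (L1 w u) *
          (q^(i+(i-(w+1))*(w+u+2-(w+1))) * qPoch (q^(i-(w+1)+1)) w)
    have hEk1 : Ef i j (k+1)
        = q^(i+(i-1-k)*(j-1-k)) * (1-q^(j-1-k)) * qbinom (j-1) k * qPoch (q^(i-k)) k := by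
      by_cases hl : j ≤ k+1
      · unfold Ef
        rw [if_pos (Or.inr hl), show j-1-k = 0 by omega]
        simp
      · unfold Ef
        rw [if_neg (by omega)]
        obtain ⟨u, rfl⟩ : ∃ u, j = k+u+2 := ⟨j-k-2, by omega⟩
        rw [show k+u+2-2 = k+u by omega, show k+1-1 = k by omega,
            show k+u+2-1 = k+u+1 by omega, show k+u+2-(k+1) = u+1 by omega,
            show k+u+1-k = u+1 by omega, show i-(k+1)+1 = i-k by omega,
            show i-(k+1) = i-1-k by omega]
        linear_combination (L2 k u) * (q^(i+(i-1-k)*(u+1)) * qPoch (q^(i-k)) k)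
    rw [hEk, hEk1]
    by_cases h0 : k = 0
    · subst h0
      obtain ⟨a, rfl⟩ : ∃ a, i = a+1 := ⟨i-1, by omega⟩
      obtain ⟨b, rfl⟩ : ∃ b, j = b+1 := ⟨j-1, by omega⟩
      simp only [Nat.sub_zero, Nat.add_sub_cancel, Nat.zero_sub, qPoch_zero, qbinom_zero]
      have h1 : qPoch (q^(a+1)) (0+1) = 1 - q^(a+1) * q^0 := by
        rw [qPoch_succ, qPoch_zero, one_mul]
      rw [h1]
      ring
    · obtain ⟨w, rfl⟩ : ∃ w, k = w+1 := ⟨k-1, by omega⟩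
      obtain ⟨u, rfl⟩ : ∃ u, j = w+u+2 := ⟨j-w-2, by omega⟩
      obtain ⟨v, rfl⟩ : ∃ v, i = w+u+v+2 := ⟨i-(w+u+2), by omega⟩
      rw [show w+u+v+2-(w+1) = u+v+1 by omega, show u+v+1+1 = u+v+2 by omega,
          show w+u+v+2-1 = w+u+v+1 by omega, show w+u+v+1-(w+1) = u+v by omega,
          show w+u+2-1 = w+u+1 by omega, show w+u+1-(w+1) = u by omega,
          show w+u+2-(w+1) = u+1 by omega, show w+1-1 = w by omega,
          show w+1+1 = w+2 by omega]
      linear_combination (core u v w) * qbinom (w+u+1) (w+1)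
  calc ∑ k ∈ Finset.range (j + 1),
        qPoch (q ^ (i - k + 1)) k * qbinom j k * q ^ ((i - k) * (j - k))
      = ∑ k ∈ Finset.range (j+1),
        ((if k = 0 then 0 else
          qPoch (q^(i-(k-1))) ((k-1)+1) * qbinom (j-1) (k-1) * q^((i-1-(k-1))*(j-1-(k-1))))
        + (if j ≤ k then 0 else
          qPoch (q^(i-k+1)) k * q^k * qbinom (j-1) k * q^((i-k)*(j-k)))) :=
        Finset.sum_congr rfl ha
    _ = (∑ k ∈ Finset.range (j+1), (if k = 0 then 0 else
          qPoch (q^(i-(k-1))) ((k-1)+1) * qbinom (j-1) (k-1) * q^((i-1-(k-1))*(j-1-(k-1)))))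
        + ∑ k ∈ Finset.range (j+1), (if j ≤ k then 0 else
          qPoch (q^(i-k+1)) k * q^k * qbinom (j-1) k * q^((i-k)*(j-k))) :=
        Finset.sum_add_distrib
    _ = (∑ k ∈ Finset.range j,
          qPoch (q^(i-k)) (k+1) * qbinom (j-1) k * q^((i-1-k)*(j-1-k)))
        + ∑ k ∈ Finset.range j,
          qPoch (q^(i-k+1)) k * q^k * qbinom (j-1) k * q^((i-k)*(j-k)) := by
        congr 1
        · rw [Finset.sum_range_succ']
          simp only [Nat.add_sub_cancel, Nat.succ_ne_zero, if_false, eq_self_iff_true, if_true, add_zero]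
        · rw [Finset.sum_range_succ, if_pos le_rfl, add_zero]
          exact Finset.sum_congr rfl fun k hk => if_neg (by simp at hk; omega)
    _ = ∑ k ∈ Finset.range j,
          (qPoch (q^(i-k)) (k+1) * qbinom (j-1) k * q^((i-1-k)*(j-1-k))
            + qPoch (q^(i-k+1)) k * q^k * qbinom (j-1) k * q^((i-k)*(j-k))) :=
        Finset.sum_add_distrib.symm
    _ = ∑ k ∈ Finset.range j,
          (qPoch (q^(i-k)) k * qbinom (j-1) k * q^((i-1-k)*(j-1-k))
            + (Ef i j k - Ef i j (k+1))) := Finset.sum_congr rfl hb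
    _ = (∑ k ∈ Finset.range j,
          qPoch (q^(i-k)) k * qbinom (j-1) k * q^((i-1-k)*(j-1-k)))
        + ∑ k ∈ Finset.range j, (Ef i j k - Ef i j (k+1)) := Finset.sum_add_distrib
    _ = ∑ k ∈ Finset.range j,
          qPoch (q^(i-k)) k * qbinom (j-1) k * q^((i-1-k)*(j-1-k)) := by
        rw [Finset.sum_range_sub' (Ef i j) j]
        have e0 : Ef i j 0 = 0 := by simp [Ef]
        have ej : Ef i j j = 0 := by simp [Ef]
        rw [e0, ej]
        ring

lemma keyOne (j : ℕ) : ∀ i : ℕ, j ≤ i →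
    ∑ k ∈ Finset.range (j + 1),
        qPoch (q ^ (i - k + 1)) k * qbinom j k * q ^ ((i - k) * (j - k)) = 1 := by
  induction j with
  | zero =>
    intro i _
    simp [qPoch_zero, qbinom_zero]
  | succ n ih =>
    intro i hi
    rw [step i (n+1) (by omega) hi]
    have hih := ih (i-1) (by omega)
    rw [← hih, show n+1-1 = n from rfl]
    refine Finset.sum_congr rfl fun k hk => ?_
    have hk' : k < n + 1 := Finset.mem_range.mp hk
    rw [show i-1-k+1 = i-k by omega]

/-- For `1 ≤ j ≤ i`, the Alladi–Gordon key identity for `(i, j)` agrees with the one for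
`(i-1, j-1)`, and both sums equal `1`. -/
theorem alladi_gordon_recurrence (i j : ℕ) (hj : 1 ≤ j) (hji : j ≤ i) :
    (∑ k ∈ Finset.range (j + 1),
        qPoch (q ^ (i - k + 1)) k * qbinom j k * q ^ ((i - k) * (j - k)) =
      ∑ k ∈ Finset.range j,
        qPoch (q ^ (i - k)) k * qbinom (j - 1) k * q ^ ((i - 1 - k) * (j - 1 - k))) ∧
    (∑ k ∈ Finset.range (j + 1),
        qPoch (q ^ (i - k + 1)) k * qbinom j k * q ^ ((i - k) * (j - k)) = 1) :=
  ⟨step i j hj hji, keyOne j i hji⟩
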